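/- Under the hypotheses of the zero-temperature theorem (upper semi-continuous entropy, finite topological entropy, β(Φ) > -∞), if μ is a weak-* accumulation point of equilibrium states (μ_t) as t → ∞, then χ(μ,Φ) = lim_{t→∞} χ(μ_t,Φ). -/

import Mathlib

/-!
Equilibrium states `μ_t` maximise `h + t χ`, so adding the optimality inequalities at two
parameters `s < t` shows that `t ↦ χ(μ_t)` is nondecreasing; call its limit `L`. Invariant measures
form a closed set, so the accumulation point `μ` is invariant, and
`h(μ) + t χ(μ) ≤ P(t) ≤ H + t χ(μ_t)` gives `χ(μ) ≤ L` after dividing by `t`.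
Conversely, by subadditivity `χ(ν) ≤ (1/n) ∫ log φₙ dν` for every invariant `ν` and every `n`,
and `ν ↦ ∫ log φₙ dν` is upper semicontinuous, being the decreasing limit of the continuous maps
`ν ↦ ∫ log max(φₙ, e^{-k}) dν`. Hence `χ` is upper semicontinuous on invariant measures, and
`L ≤ χ(μ)`.
-/

open MeasureTheory Filter Topology Set
open scoped ENNReal NNReal

/-- Positive part of an extended real, as an extended nonnegative real. -/
noncomputable def EReal.posPart (a : EReal) : ℝ≥0∞ :=
  if a = ⊤ then ⊤ else ENNReal.ofReal a.toReal

/-- `EReal`-valued logarithm of a real number: `elog r = -∞` for `r ≤ 0`. -/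
noncomputable def elog (r : ℝ) : EReal := ENNReal.log (ENNReal.ofReal r)

/-- The integral of an `EReal`-valued function, with values in `[-∞, ∞]`. -/
noncomputable def eint {X : Type*} [MeasurableSpace X] (μ : Measure X) (f : X → EReal) : EReal :=
  ((∫⁻ x, (f x).posPart ∂μ : ℝ≥0∞) : EReal) - ((∫⁻ x, (-f x).posPart ∂μ : ℝ≥0∞) : EReal)

/-- `Φ = {log φₙ}` is a subadditive potential for `T`: each `φₙ` is continuous,
nonnegative, and `φ_{n+m}(x) ≤ φₙ(x) · φₘ(Tⁿ x)`. -/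
def SubadditivePotential {X : Type*} [TopologicalSpace X] (T : X → X) (φ : ℕ → X → ℝ) : Prop :=
  (∀ n, 1 ≤ n → Continuous (φ n)) ∧ (∀ n x, 1 ≤ n → 0 ≤ φ n x) ∧
    (∀ m n : ℕ, 1 ≤ m → 1 ≤ n → ∀ x, φ (n + m) x ≤ φ n x * φ m (T^[n] x))

namespace EReal

lemma toENNReal_coe_sub_add_toENNReal {C : ℝ} (hC : 0 ≤ C) {a : EReal} (ha : a ≤ C) :
    ((C : EReal) - a).toENNReal + a.toENNReal = ENNReal.ofReal C + (-a).toENNReal := by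
  induction a with
  | bot => simp
  | top => simp at ha
  | coe r =>
    have hr : r ≤ C := EReal.coe_le_coe_iff.1 ha
    rw [← coe_sub, ← coe_neg]
    simp only [real_coe_toENNReal]
    rcases le_total 0 r with h0 | h0
    · rw [ENNReal.ofReal_of_nonpos (neg_nonpos.2 h0), add_zero,
        ← ENNReal.ofReal_add (by linarith) h0, _root_.sub_add_cancel]
    · rw [ENNReal.ofReal_of_nonpos h0, add_zero, ← ENNReal.ofReal_add hC (neg_nonneg.2 h0),
        sub_eq_add_neg]

lemma toENNReal_coe_add_sub_add {C D : ℝ} {a b : EReal} (ha : a ≤ C) (hb : b ≤ D) :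
    (((C + D : ℝ) : EReal) - (a + b)).toENNReal =
      ((C : EReal) - a).toENNReal + ((D : EReal) - b).toENNReal := by
  induction a with
  | bot => simp
  | top => simp at ha
  | coe r =>
    induction b with
    | bot => simp
    | top => simp at hb
    | coe s =>
      rw [← coe_add, ← coe_sub, ← coe_sub, ← coe_sub]
      simp only [real_coe_toENNReal]
      rw [← ENNReal.ofReal_add (by linarith [EReal.coe_le_coe_iff.1 ha])
        (by linarith [EReal.coe_le_coe_iff.1 hb])]
      ring_nf

lemma coe_add_sub_coe_ennreal_add (C D : ℝ) (A B : ℝ≥0∞) :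
    ((C + D : ℝ) : EReal) - ((A + B : ℝ≥0∞) : EReal) =
      ((C : EReal) - A) + ((D : EReal) - B) := by
  rcases eq_or_ne A ⊤ with rfl | hA
  · simp
  rcases eq_or_ne B ⊤ with rfl | hB
  · simp
  lift A to ℝ≥0 using hA
  lift B to ℝ≥0 using hB
  have hcoe : ∀ x : ℝ≥0, ((x : ℝ≥0∞) : EReal) = ((x : ℝ) : EReal) := fun x => rfl
  rw [← ENNReal.coe_add, hcoe, hcoe, hcoe, NNReal.coe_add]
  exact_mod_cast congrArg Real.toEReal (by ring : C + D - (A + B : ℝ) = (C - A) + (D - B))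

lemma coe_ennreal_sub_eq_of_add_eq {a b c d : ℝ≥0∞} (h : a + b = c + d) (hb : b ≠ ⊤)
    (hc : c ≠ ⊤) : (b : EReal) - d = c - a := by
  rcases eq_or_ne d ⊤ with rfl | hd
  · have ha : a = ⊤ := by simpa [hb] using h
    simp [ha]
  have ha : a ≠ ⊤ := fun ha => ENNReal.add_ne_top.2 ⟨hc, hd⟩ (by rw [← h, ha, top_add])
  lift a to ℝ≥0 using ha
  lift b to ℝ≥0 using hb
  lift c to ℝ≥0 using hc
  lift d to ℝ≥0 using hd
  have h' : (a : ℝ) + b = c + d := by exact_mod_cast h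
  have hcoe : ∀ x : ℝ≥0, ((x : ℝ≥0∞) : EReal) = ((x : ℝ) : EReal) := fun x => rfl
  rw [hcoe, hcoe, hcoe, hcoe]
  exact_mod_cast congrArg Real.toEReal (by linarith : (b : ℝ) - d = c - a)

lemma continuous_coe_sub (c : ℝ) : Continuous fun a : EReal => (c : EReal) - a :=
  continuous_iff_continuousAt.2 fun _ =>
    (continuousAt_add (.inl (coe_ne_top c)) (.inl (coe_ne_bot c))).comp
      (f := fun a => ((c : EReal), -a)) (continuousAt_const.prodMk continuous_neg.continuousAt)

lemma le_div_of_tendsto_of_subadditive {a : ℕ → EReal} {l : EReal}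
    (hsub : ∀ m n, 1 ≤ m → 1 ≤ n → a (m + n) ≤ a m + a n)
    (hl : Tendsto (fun n => a n / n) atTop (𝓝 l)) {n : ℕ} (hn : 1 ≤ n) : l ≤ a n / n := by
  have hmul : ∀ j, 1 ≤ j → a (j * n) ≤ j * a n := by
    intro j hj
    induction j, hj using Nat.le_induction with
    | base => simp
    | succ j hj ih =>
      calc a ((j + 1) * n) = a (j * n + n) := by rw [add_mul, one_mul]
      _ ≤ a (j * n) + a n := hsub _ _ (Nat.one_le_iff_ne_zero.2 (by positivity)) hn
      _ ≤ j * a n + a n := add_le_add_left ih _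
      _ = (j + 1 : ℕ) * a n := by
        rw [Nat.cast_succ, right_distrib_of_nonneg (by positivity) zero_le_one, one_mul]
  have hjn : Tendsto (fun j : ℕ => j * n) atTop atTop := tendsto_id.atTop_mul_const' hn
  refine le_of_tendsto (hl.comp hjn) ?_
  filter_upwards [eventually_ge_atTop 1] with j hj
  calc a (j * n) / ↑(j * n) ≤ (j * a n) / ↑(j * n) :=
        div_le_div_right_of_nonneg (by positivity) (hmul j hj)
  _ = a n / n := by
    rw [natCast_mul, mul_comm (j : EReal), mul_comm (j : EReal), mul_div_mul_cancel
      (natCast_ne_bot j) (natCast_ne_top j) (by exact_mod_cast (by omega : j ≠ 0))]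

lemma eq_coe_toReal_of_coe_add_mul_eq {a t p : ℝ} {c : EReal} (ht : 0 < t)
    (h : (a : EReal) + t * c = p) : c = c.toReal := by
  induction c with
  | bot =>
    rw [coe_mul_bot_of_pos ht, add_bot] at h
    exact absurd h.symm (coe_ne_bot p)
  | top =>
    rw [coe_mul_top_of_pos ht, coe_add_top] at h
    exact absurd h.symm (coe_ne_top p)
  | coe r => rfl

lemma le_of_tendsto_of_add_mul_le {f : ℝ → EReal} {c L : EReal} {a H : ℝ}
    (hf : Tendsto f atTop (𝓝 L))
    (h : ∀ t ∈ Ioi (0 : ℝ), (a : EReal) + t * c ≤ H + t * f t) : c ≤ L := by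
  by_contra! hLc
  obtain ⟨u, hLu, huc⟩ := exists_between_coe_real hLc
  obtain ⟨v, huv, hvc⟩ := exists_between_coe_real huc
  have huv' : u < v := EReal.coe_lt_coe_iff.1 huv
  obtain ⟨t, hfu, ht⟩ := ((hf.eventually_lt_const hLu).and
    (eventually_gt_atTop (max 0 ((H - a) / (v - u))))).exists
  have ht0 : 0 < t := (le_max_left _ _).trans_lt ht
  have ht0' : (0 : EReal) ≤ t := by exact_mod_cast ht0.le
  have key : ((a + t * v : ℝ) : EReal) ≤ ((H + t * u : ℝ) : EReal) := calc
    ((a + t * v : ℝ) : EReal) = a + t * (v : EReal) := by norm_cast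
    _ ≤ a + t * c := add_le_add le_rfl (mul_le_mul_of_nonneg_left hvc.le ht0')
    _ ≤ H + t * f t := h t ht0
    _ ≤ H + t * u := add_le_add le_rfl (mul_le_mul_of_nonneg_left hfu.le ht0')
    _ = _ := by norm_cast
  have htuv : (H - a) / (v - u) < t := (le_max_right _ _).trans_lt ht
  rw [div_lt_iff₀ (by linarith)] at htuv
  linarith [EReal.coe_le_coe_iff.1 key]

end EReal

lemma MonotoneOn.exists_tendsto_atTop {β : Type*} [CompleteLinearOrder β] [TopologicalSpace β]
    [OrderTopology β] {f : ℝ → β} {a : ℝ} (hf : MonotoneOn f (Ioi a)) :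
    ∃ L, Tendsto f atTop (𝓝 L) := by
  have hmono : Monotone fun t => f (max t (a + 1)) := fun s t hst =>
    hf (by simp) (by simp) (max_le_max hst le_rfl)
  refine ⟨_, (tendsto_atTop_iSup hmono).congr' ?_⟩
  filter_upwards [eventually_ge_atTop (a + 1)] with t ht
  rw [max_eq_left ht]

lemma UpperSemicontinuousWithinAt.le_of_mapClusterPt {α β ι : Type*} [TopologicalSpace α]
    [LinearOrder β] [DenselyOrdered β] [TopologicalSpace β] [OrderTopology β] {f : α → β}
    {s : Set α} {a : α} {u : ι → α} {l : Filter ι} {b : β}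
    (hf : UpperSemicontinuousWithinAt f s a) (ha : MapClusterPt a l u)
    (hs : ∀ᶠ i in l, u i ∈ s) (hb : Tendsto (fun i => f (u i)) l (𝓝 b)) : b ≤ f a := by
  by_contra! h
  obtain ⟨c, hac, hcb⟩ := exists_between h
  have hfreq : ∃ᶠ i in l, f (u i) < c :=
    ((ha.frequently (eventually_nhdsWithin_iff.1 (hf c hac))).and_eventually hs).mono
      fun i hi => hi.1 hi.2
  obtain ⟨i, hlt, hgt⟩ := (hfreq.and_eventually (hb.eventually_const_lt hcb)).exists
  exact hlt.not_gt hgt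

lemma MeasureTheory.ProbabilityMeasure.isClosed_setOf_map_eq {X : Type*} [TopologicalSpace X]
    [HasOuterApproxClosed X] [MeasurableSpace X] [BorelSpace X] {T : X → X} (hT : Continuous T) :
    IsClosed {μ : ProbabilityMeasure X | Measure.map T (μ : Measure X) = (μ : Measure X)} := by
  have hS : {μ : ProbabilityMeasure X | Measure.map T (μ : Measure X) = (μ : Measure X)} =
      {μ | μ.map hT.measurable.aemeasurable = μ} := by
    ext μ
    simp only [mem_ofPred_eq, ← ProbabilityMeasure.toMeasure_injective.eq_iff,
      ProbabilityMeasure.toMeasure_map]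
  rw [hS]
  exact isClosed_eq (ProbabilityMeasure.continuous_map hT) continuous_id

lemma continuous_elog : Continuous elog :=
  ENNReal.continuous_log.comp ENNReal.continuous_ofReal

lemma elog_mono : Monotone elog := fun _ _ h =>
  ENNReal.log_monotone (ENNReal.ofReal_le_ofReal h)

lemma elog_of_pos {r : ℝ} (hr : 0 < r) : elog r = Real.log r :=
  ENNReal.log_ofReal_of_pos hr

lemma elog_mul {a : ℝ} (ha : 0 ≤ a) (b : ℝ) : elog (a * b) = elog a + elog b := by
  rw [elog, ENNReal.ofReal_mul ha, ENNReal.log_mul_add, elog, elog]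

lemma tendsto_elog_max_exp_neg (r : ℝ) :
    Tendsto (fun k : ℕ => elog (max r (Real.exp (-k)))) atTop (𝓝 (elog r)) := by
  have hexp : Tendsto (fun k : ℕ => Real.exp (-k)) atTop (𝓝 0) :=
    Real.tendsto_exp_neg_atTop_nhds_zero.comp tendsto_natCast_atTop_atTop
  have hmax : elog (max r 0) = elog r := by simp [elog]
  rw [← hmax]
  exact (continuous_elog.tendsto _).comp (tendsto_const_nhds.max hexp)

lemma Continuous.exists_forall_elog_le {X : Type*} [TopologicalSpace X] [CompactSpace X]
    {f : X → ℝ} (hf : Continuous f) : ∃ C : ℝ, ∀ x, elog (f x) ≤ C := by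
  obtain ⟨M, hM⟩ := (isCompact_range hf).bddAbove
  refine ⟨Real.log (max M 1), fun x => ?_⟩
  rw [← elog_of_pos (by positivity)]
  exact elog_mono ((hM (mem_range_self x)).trans (le_max_left M 1))

section eint

variable {X : Type*} [MeasurableSpace X] {μ : Measure X}

-- `EReal.posPart` is Mathlib's `EReal.toENNReal`.
lemma eint_eq_lintegral_toENNReal_sub (f : X → EReal) :
    eint μ f = ((∫⁻ x, (f x).toENNReal ∂μ : ℝ≥0∞) : EReal) -
      ((∫⁻ x, (-f x).toENNReal ∂μ : ℝ≥0∞) : EReal) :=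
  rfl

lemma eint_mono {f g : X → EReal} (hfg : f ≤ g) : eint μ f ≤ eint μ g :=
  EReal.sub_le_sub
    (EReal.coe_ennreal_le_coe_ennreal_iff.2 <| lintegral_mono fun x =>
      EReal.toENNReal_le_toENNReal (hfg x))
    (EReal.coe_ennreal_le_coe_ennreal_iff.2 <| lintegral_mono fun x =>
      EReal.toENNReal_le_toENNReal (EReal.neg_le_neg_iff.2 (hfg x)))

lemma eint_coe {g : X → ℝ} (hg : Integrable g μ) :
    eint μ (fun x => (g x : EReal)) = ((∫ x, g x ∂μ : ℝ) : EReal) := by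
  have hneg : ∀ x, (-(g x : EReal)).toENNReal = ENNReal.ofReal (-g x) := fun x => by
    rw [← EReal.coe_neg, EReal.real_coe_toENNReal]
  have hfin : ∫⁻ x, ENNReal.ofReal (-g x) ∂μ ≠ ⊤ := hg.neg.lintegral_lt_top.ne
  simp only [eint_eq_lintegral_toENNReal_sub, EReal.real_coe_toENNReal, hneg,
    integral_eq_lintegral_pos_part_sub_lintegral_neg_part hg, EReal.coe_sub,
    EReal.coe_ennreal_toReal hg.lintegral_lt_top.ne, EReal.coe_ennreal_toReal hfin]

lemma eint_comp {Y : Type*} [MeasurableSpace Y] {ν : Measure Y} {S : X → Y}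
    (hS : MeasurePreserving S μ ν) {f : Y → EReal} (hf : Measurable f) :
    eint μ (fun x => f (S x)) = eint ν f := by
  rw [eint_eq_lintegral_toENNReal_sub, eint_eq_lintegral_toENNReal_sub,
    hS.lintegral_comp (f := fun y => (f y).toENNReal) (measurable_ereal_toENNReal.comp hf),
    hS.lintegral_comp (f := fun y => (-f y).toENNReal) (measurable_ereal_toENNReal.comp hf.neg)]

variable [IsProbabilityMeasure μ]

-- Below a bound `C`, `eint` is a single lower integral of the nonnegative `C - f`; this is what
-- gives additivity and monotone convergence.
lemma eint_eq_coe_sub_lintegral {f : X → EReal} (hf : Measurable f) {C : ℝ} (hC : 0 ≤ C)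
    (hfC : ∀ x, f x ≤ C) :
    eint μ f = C - ((∫⁻ x, ((C : EReal) - f x).toENNReal ∂μ : ℝ≥0∞) : EReal) := by
  have hsum : ∫⁻ x, ((C : EReal) - f x).toENNReal ∂μ + ∫⁻ x, (f x).toENNReal ∂μ =
      ENNReal.ofReal C + ∫⁻ x, (-f x).toENNReal ∂μ := by
    rw [← lintegral_add_right _ hf.ereal_toENNReal,
      lintegral_congr fun x => EReal.toENNReal_coe_sub_add_toENNReal hC (hfC x),
      lintegral_add_left measurable_const, lintegral_const, measure_univ, mul_one]
  have hfin : ∫⁻ x, (f x).toENNReal ∂μ ≠ ⊤ := by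
    refine ne_top_of_le_ne_top (by simp : ∫⁻ _, ENNReal.ofReal C ∂μ ≠ ⊤) ?_
    exact lintegral_mono fun x => EReal.toENNReal_le_toENNReal (hfC x)
  rw [eint_eq_lintegral_toENNReal_sub, EReal.coe_ennreal_sub_eq_of_add_eq hsum hfin
    ENNReal.ofReal_ne_top, EReal.coe_ennreal_ofReal, max_eq_left hC]

lemma eint_add {f g : X → EReal} (hf : Measurable f) (hg : Measurable g) {C D : ℝ}
    (hfC : ∀ x, f x ≤ C) (hgD : ∀ x, g x ≤ D) :
    eint μ (fun x => f x + g x) = eint μ f + eint μ g := by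
  have hfC' : ∀ x, f x ≤ max C 0 := fun x => (hfC x).trans (by exact_mod_cast le_max_left C 0)
  have hgD' : ∀ x, g x ≤ max D 0 := fun x => (hgD x).trans (by exact_mod_cast le_max_left D 0)
  have hfg : ∀ x, f x + g x ≤ ((max C 0 + max D 0 : ℝ) : EReal) := fun x => by
    rw [EReal.coe_add]
    exact add_le_add (hfC' x) (hgD' x)
  have hm : Measurable fun x => (((max C 0 : ℝ) : EReal) - f x).toENNReal :=
    ((EReal.continuous_coe_sub _).measurable.comp hf).ereal_toENNReal
  rw [eint_eq_coe_sub_lintegral (f := fun x => f x + g x) (hf.add hg) (by positivity) hfg,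
    eint_eq_coe_sub_lintegral hf (le_max_right C 0) hfC',
    eint_eq_coe_sub_lintegral hg (le_max_right D 0) hgD', ← EReal.coe_add_sub_coe_ennreal_add,
    ← lintegral_add_left hm,
    lintegral_congr fun x => EReal.toENNReal_coe_add_sub_add (hfC' x) (hgD' x)]

lemma tendsto_eint_of_antitone {g : ℕ → X → EReal} {f : X → EReal}
    (hg : ∀ k, Measurable (g k)) (hf : Measurable f) (hanti : Antitone g) {C : ℝ}
    (hC : ∀ x, g 0 x ≤ C) (hlim : ∀ x, Tendsto (fun k => g k x) atTop (𝓝 (f x))) :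
    Tendsto (fun k => eint μ (g k)) atTop (𝓝 (eint μ f)) := by
  obtain ⟨C, hC0, hgC⟩ : ∃ C : ℝ, 0 ≤ C ∧ ∀ k x, g k x ≤ C :=
    ⟨max C 0, le_max_right C 0, fun k x =>
      (hanti (Nat.zero_le k) x).trans ((hC x).trans (by exact_mod_cast le_max_left C 0))⟩
  have hfC : ∀ x, f x ≤ C := fun x => by
    have hx : Antitone fun k => g k x := fun i j hij => hanti hij x
    exact (hx.le_of_tendsto (hlim x) 0).trans (hgC 0 x)
  have hlintegral : Tendsto (fun k => ∫⁻ x, ((C : EReal) - g k x).toENNReal ∂μ) atTop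
      (𝓝 (∫⁻ x, ((C : EReal) - f x).toENNReal ∂μ)) :=
    lintegral_tendsto_of_tendsto_of_monotone
      (fun k => ((EReal.continuous_coe_sub C).measurable.comp (hg k)).ereal_toENNReal.aemeasurable)
      (ae_of_all _ fun x i j hij =>
        EReal.toENNReal_le_toENNReal (EReal.sub_le_sub le_rfl (hanti hij x)))
      (ae_of_all _ fun x => (EReal.continuous_toENNReal.tendsto _).comp
        (((EReal.continuous_coe_sub C).tendsto _).comp (hlim x)))
  rw [eint_eq_coe_sub_lintegral hf hC0 hfC]
  refine (((EReal.continuous_coe_sub C).tendsto _).comp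
    ((continuous_coe_ennreal_ereal.tendsto _).comp hlintegral)).congr fun k => ?_
  exact (eint_eq_coe_sub_lintegral (hg k) hC0 (hgC k)).symm

end eint

lemma upperSemicontinuous_eint_elog {X : Type*} [TopologicalSpace X] [CompactSpace X]
    [MeasurableSpace X] [OpensMeasurableSpace X] {f : X → ℝ} (hf : Continuous f) :
    UpperSemicontinuous fun ρ : ProbabilityMeasure X =>
      eint (ρ : Measure X) fun x => elog (f x) := by
  intro μ b hb
  -- `elog ∘ g k` are continuous and real-valued, and decrease to `elog ∘ f`
  set g : ℕ → X → ℝ := fun k x => max (f x) (Real.exp (-k))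
  have hg_pos : ∀ k x, 0 < g k x := fun k x => (Real.exp_pos _).trans_le (le_max_right _ _)
  have hg_cont : ∀ k, Continuous (g k) := fun k => hf.max continuous_const
  obtain ⟨C, hC⟩ := (hg_cont 0).exists_forall_elog_le
  have htend : Tendsto (fun k => eint (μ : Measure X) fun x => elog (g k x)) atTop
      (𝓝 (eint (μ : Measure X) fun x => elog (f x))) :=
    tendsto_eint_of_antitone (fun k => (continuous_elog.comp (hg_cont k)).measurable)
      (continuous_elog.comp hf).measurable
      (fun i j hij x => elog_mono (max_le_max le_rfl (Real.exp_le_exp.2 (by simpa using hij))))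
      hC (fun x => tendsto_elog_max_exp_neg (f x))
  obtain ⟨k, hk⟩ := (htend.eventually_lt_const hb).exists
  let G : BoundedContinuousFunction X ℝ :=
    .mkOfCompact ⟨fun x => Real.log (g k x), (hg_cont k).log fun x => (hg_pos k x).ne'⟩
  have hG : ∀ ρ : ProbabilityMeasure X,
      (eint (ρ : Measure X) fun x => elog (g k x)) = ((∫ x, G x ∂ρ : ℝ) : EReal) := by
    intro ρ
    simp_rw [elog_of_pos (hg_pos k _)]
    exact eint_coe (G.integrable _)
  have hcont : Continuous fun ρ : ProbabilityMeasure X =>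
      eint (ρ : Measure X) fun x => elog (g k x) := by
    simp_rw [hG]
    exact continuous_coe_real_ereal.comp
      (ProbabilityMeasure.continuous_integral_boundedContinuousFunction G)
  filter_upwards [hcont.continuousAt.eventually_lt continuousAt_const hk] with ρ hρ
  exact (eint_mono fun x => elog_mono (le_max_left _ _)).trans_lt hρ

namespace SubadditivePotential

variable {X : Type*} [TopologicalSpace X] [CompactSpace X] [MeasurableSpace X]
  [OpensMeasurableSpace X] {T : X → X} {φ : ℕ → X → ℝ}

lemma eint_elog_add_le (hφ : SubadditivePotential T φ) {ν : Measure X} [IsProbabilityMeasure ν]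
    (hν : MeasurePreserving T ν ν) {m n : ℕ} (hm : 1 ≤ m) (hn : 1 ≤ n) :
    eint ν (fun x => elog (φ (m + n) x)) ≤
      eint ν (fun x => elog (φ m x)) + eint ν (fun x => elog (φ n x)) := by
  obtain ⟨hcont, hnonneg, hsub⟩ := hφ
  obtain ⟨C, hC⟩ := (hcont m hm).exists_forall_elog_le
  obtain ⟨D, hD⟩ := (hcont n hn).exists_forall_elog_le
  have hmeas : ∀ k, 1 ≤ k → Measurable fun x => elog (φ k x) := fun k hk =>
    (continuous_elog.comp (hcont k hk)).measurable
  calc eint ν (fun x => elog (φ (m + n) x))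
      ≤ eint ν (fun x => elog (φ m x) + elog (φ n (T^[m] x))) :=
        eint_mono fun x => (elog_mono (hsub n m hn hm x)).trans_eq (elog_mul (hnonneg m x hm) _)
    _ = _ := by
      rw [eint_add (g := fun x => elog (φ n (T^[m] x))) (hmeas m hm)
        ((hmeas n hn).comp (hν.measurable.iterate m)) hC (fun x => hD _),
        eint_comp (f := fun x => elog (φ n x)) (hν.iterate m) (hmeas n hn)]

lemma le_eint_elog_div (hφ : SubadditivePotential T φ) {ν : Measure X} [IsProbabilityMeasure ν]
    (hν : MeasurePreserving T ν ν) {l : EReal}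
    (hl : Tendsto (fun n : ℕ => eint ν (fun x => elog (φ n x)) / n) atTop (𝓝 l)) {n : ℕ}
    (hn : 1 ≤ n) : l ≤ eint ν (fun x => elog (φ n x)) / n :=
  EReal.le_div_of_tendsto_of_subadditive (fun _ _ hm hn => hφ.eint_elog_add_le hν hm hn) hl hn

theorem upperSemicontinuousOn_lyapunov (hφ : SubadditivePotential T φ) (hT : Measurable T)
    {χ : ProbabilityMeasure X → EReal}
    (hχ : ∀ μ : ProbabilityMeasure X, Measure.map T (μ : Measure X) = (μ : Measure X) →
      Tendsto (fun n : ℕ => eint (μ : Measure X) (fun x => elog (φ n x)) / (n : EReal))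
        atTop (𝓝 (χ μ))) :
    UpperSemicontinuousOn χ
      {μ : ProbabilityMeasure X | Measure.map T (μ : Measure X) = (μ : Measure X)} := by
  intro μ hμ b hb
  obtain ⟨n, hnb, hn⟩ :=
    ((hχ μ hμ).eventually_lt_const hb |>.and (eventually_ge_atTop 1)).exists
  have hn0 : (0 : EReal) < n := by exact_mod_cast hn
  rw [EReal.div_lt_iff hn0 (EReal.natCast_ne_top n)] at hnb
  filter_upwards [nhdsWithin_le_nhds (upperSemicontinuous_eint_elog (hφ.1 n hn) μ _ hnb),
    self_mem_nhdsWithin] with ρ hρ hρS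
  exact (hφ.le_eint_elog_div ⟨hT, hρS⟩ (hχ ρ hρS) hn).trans_lt
    ((EReal.div_lt_iff hn0 (EReal.natCast_ne_top n)).2 hρ)

end SubadditivePotential

lemma monotoneOn_of_maximize_add_mul {α : Type*} {F : α → ℝ} {G : α → EReal} {P : ℝ → ℝ}
    {x : ℝ → α}
    (hle : ∀ s ∈ Ioi (0 : ℝ), ∀ t ∈ Ioi (0 : ℝ), (F (x t) : EReal) + s * G (x t) ≤ P s)
    (heq : ∀ t ∈ Ioi (0 : ℝ), (F (x t) : EReal) + t * G (x t) = P t) :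
    MonotoneOn (fun t => G (x t)) (Ioi 0) := by
  intro s hs t ht hst
  have hG : ∀ t ∈ Ioi (0 : ℝ), G (x t) = (G (x t)).toReal := fun t ht =>
    EReal.eq_coe_toReal_of_coe_add_mul_eq ht (heq t ht)
  have h1 := hle s hs t ht
  have h2 := hle t ht s hs
  rw [← heq s hs, hG s hs, hG t ht] at h1
  rw [← heq t ht, hG s hs, hG t ht] at h2
  change G (x s) ≤ G (x t)
  rw [hG s hs, hG t ht, EReal.coe_le_coe_iff]
  norm_cast at h1 h2
  rcases hst.eq_or_lt with rfl | hlt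
  · exact le_rfl
  nlinarith

theorem lyapunov_exponents_of_equilibrium_states_tendsto_general
    {X : Type*} [MetricSpace X] [CompactSpace X]
    [MeasurableSpace X] [BorelSpace X]
    (T : X → X) (hT : Continuous T)
    (φ : ℕ → X → ℝ) (hφ : SubadditivePotential T φ)
    -- metric entropies: nonnegative, bounded (finite topological entropy), and
    -- upper semi-continuous on the set of invariant measures
    (h : ProbabilityMeasure X → ℝ)
    (htop : ∃ H : ℝ, ∀ μ : ProbabilityMeasure X,
      Measure.map T (μ : Measure X) = (μ : Measure X) → h μ ≤ H)
    -- Lyapunov exponents of invariant measures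
    (χ : ProbabilityMeasure X → EReal)
    (hχ : ∀ μ : ProbabilityMeasure X, Measure.map T (μ : Measure X) = (μ : Measure X) →
      Tendsto (fun n : ℕ => eint (μ : Measure X) (fun x => elog (φ n x)) / (n : EReal))
        atTop (𝓝 (χ μ)))
    -- the topological pressure, via the variational principle, and equilibrium states
    (P : ℝ → ℝ)
    (hP : ∀ t ∈ Set.Ioi (0 : ℝ), (P t : EReal) =
      sSup ((fun ν => (h ν : EReal) + (t : EReal) * χ ν) ''
        {ν : ProbabilityMeasure X | Measure.map T (ν : Measure X) = (ν : Measure X)}))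
    (μt : ℝ → ProbabilityMeasure X)
    (hEq : ∀ t ∈ Set.Ioi (0 : ℝ),
      Measure.map T (μt t : Measure X) = (μt t : Measure X) ∧
      (h (μt t) : EReal) + (t : EReal) * χ (μt t) = (P t : EReal))
    -- μ_inf is a weak-* accumulation point of (μ_t) as t → ∞
    (μ_inf : ProbabilityMeasure X) (hacc : MapClusterPt μ_inf atTop μt) :
    Tendsto (fun t => χ (μt t)) atTop (𝓝 (χ μ_inf)) := by
  set S := {ν : ProbabilityMeasure X | Measure.map T (ν : Measure X) = (ν : Measure X)}
  have hvar : ∀ t ∈ Ioi (0 : ℝ), ∀ ν ∈ S, (h ν : EReal) + t * χ ν ≤ P t := by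
    intro t ht ν hν
    rw [hP t ht]
    exact le_sSup ⟨ν, hν, rfl⟩
  obtain ⟨L, hL⟩ := (monotoneOn_of_maximize_add_mul (fun s hs t ht => hvar s hs _ (hEq t ht).1)
    (fun t ht => (hEq t ht).2)).exists_tendsto_atTop
  have hS : ∀ᶠ t in atTop, μt t ∈ S := (eventually_gt_atTop 0).mono fun t ht => (hEq t ht).1
  have hμS : μ_inf ∈ S :=
    (ProbabilityMeasure.isClosed_setOf_map_eq hT).mem_of_mapClusterPt hacc hS
  obtain ⟨H, hH⟩ := htop
  have hle : χ μ_inf ≤ L := EReal.le_of_tendsto_of_add_mul_le hL fun t ht => calc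
    (h μ_inf : EReal) + t * χ μ_inf ≤ P t := hvar t ht μ_inf hμS
    _ = h (μt t) + t * χ (μt t) := (hEq t ht).2.symm
    _ ≤ H + t * χ (μt t) := add_le_add (EReal.coe_le_coe_iff.2 (hH _ (hEq t ht).1)) le_rfl
  have hge : L ≤ χ μ_inf :=
    UpperSemicontinuousWithinAt.le_of_mapClusterPt
      (hφ.upperSemicontinuousOn_lyapunov hT.measurable hχ μ_inf hμS) hacc hS hL
  rwa [le_antisymm hle hge]

/-- if μ is a weak-* accumulation point of equilibrium states (μ_t) as
t → ∞, then χ(μ,Φ) = lim_{t→∞} χ(μ_t,Φ). -/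
theorem lyapunov_exponents_of_equilibrium_states_tendsto
    {X : Type*} [MetricSpace X] [CompactSpace X] [Nonempty X]
    [MeasurableSpace X] [BorelSpace X]
    (T : X → X) (hT : Continuous T)
    (φ : ℕ → X → ℝ) (hφ : SubadditivePotential T φ)
    -- metric entropies: nonnegative, bounded (finite topological entropy), and
    -- upper semi-continuous on the set of invariant measures
    (h : ProbabilityMeasure X → ℝ) (hh0 : ∀ μ, 0 ≤ h μ)
    (htop : ∃ H : ℝ, ∀ μ : ProbabilityMeasure X,
      Measure.map T (μ : Measure X) = (μ : Measure X) → h μ ≤ H)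
    (husc : UpperSemicontinuousOn h
      {μ : ProbabilityMeasure X | Measure.map T (μ : Measure X) = (μ : Measure X)})
    -- Lyapunov exponents of invariant measures
    (χ : ProbabilityMeasure X → EReal)
    (hχ : ∀ μ : ProbabilityMeasure X, Measure.map T (μ : Measure X) = (μ : Measure X) →
      Tendsto (fun n : ℕ => eint (μ : Measure X) (fun x => elog (φ n x)) / (n : EReal))
        atTop (𝓝 (χ μ)))
    -- β(Φ) > -∞
    (β : EReal) (hβne : β ≠ ⊥)
    (hβ : Tendsto (fun n : ℕ => elog (⨆ x, φ n x) / (n : EReal)) atTop (𝓝 β))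
    -- the topological pressure, via the variational principle, and equilibrium states
    (P : ℝ → ℝ)
    (hP : ∀ t ∈ Set.Ioi (0 : ℝ), (P t : EReal) =
      sSup ((fun ν => (h ν : EReal) + (t : EReal) * χ ν) ''
        {ν : ProbabilityMeasure X | Measure.map T (ν : Measure X) = (ν : Measure X)}))
    (μt : ℝ → ProbabilityMeasure X)
    (hEq : ∀ t ∈ Set.Ioi (0 : ℝ),
      Measure.map T (μt t : Measure X) = (μt t : Measure X) ∧
      (h (μt t) : EReal) + (t : EReal) * χ (μt t) = (P t : EReal))
    -- μ_inf is a weak-* accumulation point of (μ_t) as t → ∞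
    (μ_inf : ProbabilityMeasure X) (hacc : MapClusterPt μ_inf atTop μt) :
    Tendsto (fun t => χ (μt t)) atTop (𝓝 (χ μ_inf)) :=
  lyapunov_exponents_of_equilibrium_states_tendsto_general T hT φ hφ h htop χ hχ P hP μt hEq μ_inf
    hacc
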